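/- Let G be a compact Hausdorff topological group containing a Boolean subgroup B (every element of B has order at most 2) that is not closed in G, and let P = Γ(B) ≤ Aut(G) be the group of inner automorphisms by elements of B. If the closure cl(B) of B in G satisfies cl(B) ∩ Z(G) = {e_G}, then the topological semidirect product G ⋊ P is not minimal. -/

import Mathlib

open scoped Topology

/-- The group of self-homeomorphisms of `X`, with composition as multiplication:
`(f * g) x = f (g x)`, identity `Homeomorph.refl` and inverse `Homeomorph.symm`. -/
instance homeoGroup (X : Type*) [TopologicalSpace X] : Group (X ≃ₜ X) where
  mul f g := g.trans f
  one := Homeomorph.refl X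
  inv := Homeomorph.symm
  mul_assoc f g h := rfl
  one_mul f := rfl
  mul_one f := rfl
  inv_mul_cancel f := by ext x; exact f.symm_apply_apply x

/-- The compact-open topology on the homeomorphism group `H(X)`, induced from the
compact-open topology on `C(X, X)`. -/
def coTop (X : Type*) [TopologicalSpace X] : TopologicalSpace (X ≃ₜ X) :=
  TopologicalSpace.induced (fun f : X ≃ₜ X => (f : C(X, X))) ContinuousMap.compactOpen

/-- The group `Aut(G)` of all topological group automorphisms of a topological group `G`
(group automorphisms that are homeomorphisms), as a subgroup of the homeomorphism
group of `G`. -/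
def topAut (G : Type*) [Group G] [TopologicalSpace G] : Subgroup (G ≃ₜ G) where
  carrier := {f : G ≃ₜ G | ∀ a b : G, f (a * b) = f a * f b}
  one_mem' := fun _ _ => rfl
  mul_mem' := by
    intro f g hf hg a b
    show f (g (a * b)) = f (g a) * f (g b)
    rw [hg, hf]
  inv_mem' := by
    intro f hf a b
    show f.symm (a * b) = f.symm a * f.symm b
    apply f.injective
    rw [hf]
    simp

/-- The compact-open topology on `Aut(G)`. -/
def autTop (G : Type*) [Group G] [TopologicalSpace G] : TopologicalSpace ↥(topAut G) :=
  TopologicalSpace.induced (Subtype.val : ↥(topAut G) → G ≃ₜ G) (coTop G)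

/-- The tautological action of a subgroup `P ≤ Aut(G)` on `G`, as a homomorphism
`P →* MulAut G`. -/
def actHom {G : Type*} [Group G] [TopologicalSpace G] (P : Subgroup ↥(topAut G)) :
    ↥P →* MulAut G where
  toFun p := MulEquiv.mk' p.1.1.toEquiv (fun a b => p.1.2 a b)
  map_one' := rfl
  map_mul' _ _ := rfl

/-- The topology on a subgroup `P ≤ Aut(G)`, inherited from the compact-open topology. -/
def subAutTop {G : Type*} [Group G] [TopologicalSpace G] (P : Subgroup ↥(topAut G)) :
    TopologicalSpace ↥P :=
  TopologicalSpace.induced (Subtype.val : ↥P → ↥(topAut G)) (autTop G)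

/-- The product topology on the topological semidirect product `G ⋊ P`, whose underlying
group is `SemidirectProduct G ↥P (actHom P)`, i.e. the multiplication is
`(g₁, p₁) * (g₂, p₂) = (g₁ * p₁ g₂, p₁ * p₂)`. -/
def sdpTop {G : Type*} [Group G] [TopologicalSpace G] (P : Subgroup ↥(topAut G)) :
    TopologicalSpace (G ⋊[actHom P] ↥P) :=
  TopologicalSpace.induced (fun x : G ⋊[actHom P] ↥P => (x.left, x.right))
    (@instTopologicalSpaceProd G ↥P _ (subAutTop P))

/-- A (Hausdorff) topological group `(G, τ)` is *minimal* if every Hausdorff group topology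
on `G` coarser than `τ` equals `τ`. -/
def IsMinimalTopGroup (G : Type*) [Group G] (τ : TopologicalSpace G) : Prop :=
  ∀ σ : TopologicalSpace G, τ ≤ σ → @IsTopologicalGroup G σ _ → @T2Space G σ → σ = τ

/-- The canonical homomorphism `Γ : G → Aut(G)` sending `g` to the inner automorphism
`γ_g : x ↦ g * x * g⁻¹`; its range is the subgroup `Inn(G)` of inner automorphisms. -/
def innerAutHom (G : Type*) [Group G] [TopologicalSpace G] [IsTopologicalGroup G] :
    G →* ↥(topAut G) where
  toFun g := ⟨(Homeomorph.mulLeft g).trans (Homeomorph.mulRight g⁻¹), by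
    intro a b
    show g * (a * b) * g⁻¹ = (g * a * g⁻¹) * (g * b * g⁻¹)
    group⟩
  map_one' := by
    apply Subtype.ext
    ext x
    show (1 : G) * x * (1 : G)⁻¹ = x
    group
  map_mul' g h := by
    apply Subtype.ext
    ext x
    show (g * h) * x * (g * h)⁻¹ = g * (h * x * h⁻¹) * g⁻¹
    group

/-!
Since `cl(B)` is compact and meets the centre trivially, conjugation identifies `cl(B)` with
its image in `C(G, G)`. Hence the inverse `β : Γ(B) → B` of `Γ` is continuous, and
`(g, p) ↦ (g β(p), β(p))` is a continuous injective homomorphism `G ⋊ Γ(B) → G × B`.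
Pick `x ∈ cl(B) \ B`. The group `cl(B)` is Boolean, hence abelian, so `B` maps injectively
into the Hausdorff group `cl(B) / {1, x}`, where `b → x` becomes `b → 1`. The topology induced
from `G × cl(B) / {1, x}` is then a coarser Hausdorff group topology on `G ⋊ Γ(B)` in which
`(b⁻¹, Γ(b)) → 1` as `b → x`, whereas in the product topology `b⁻¹ → x⁻¹ ≠ 1`.
-/

open Filter Function

attribute [local instance] subAutTop sdpTop

universe u

theorem not_isMinimalTopGroup_of_injective {H L ι : Type*} [Group H] [τ : TopologicalSpace H]
    [Group L] [TopologicalSpace L] [IsTopologicalGroup L] [T2Space L]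
    (φ : H →* L) (hφ : Injective φ) (hφc : Continuous φ) {F : Filter ι} {f : ι → H}
    (hφf : Tendsto (φ ∘ f) F (𝓝 1)) (hf : ¬ Tendsto f F (𝓝 1)) :
    ¬ IsMinimalTopGroup H τ := by
  intro hmin
  have hσ : .induced φ ‹_› = τ := hmin _ hφc.le_induced (topologicalGroup_induced φ)
    (@Topology.IsEmbedding.t2Space _ _ (.induced φ _) _ _ φ (.induced hφ))
  refine hf ?_
  rw [← hσ, nhds_induced, map_one, tendsto_comap_iff]
  exact hφf

namespace SemidirectProduct

variable {N H : Type*} [Group N] [Group H] {φ : H →* MulAut N}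

def toProdOfConj (β : H →* N) (hβ : ∀ h n, φ h n = β h * n * (β h)⁻¹) :
    N ⋊[φ] H →* N × H where
  toFun x := (x.left * β x.right, x.right)
  map_one' := by simp
  map_mul' x y := by
    ext
    · simp [hβ, mul_assoc]
    · rfl

@[simp]
theorem toProdOfConj_apply (β : H →* N) (hβ : ∀ h n, φ h n = β h * n * (β h)⁻¹)
    (x : N ⋊[φ] H) : toProdOfConj β hβ x = (x.left * β x.right, x.right) := rfl

theorem toProdOfConj_injective (β : H →* N) (hβ : ∀ h n, φ h n = β h * n * (β h)⁻¹) :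
    Injective (toProdOfConj β hβ) := by
  intro x y hxy
  simp only [toProdOfConj_apply, Prod.mk.injEq] at hxy
  ext
  · simpa [hxy.2] using hxy.1
  · exact hxy.2

end SemidirectProduct

section AutTopology

variable {G : Type*} [Group G] [TopologicalSpace G] (P : Subgroup (topAut G))

theorem continuous_sdpTop_left :
    Continuous (SemidirectProduct.left : G ⋊[actHom P] P → G) := by
  unfold sdpTop
  exact continuous_fst.comp
    (continuous_induced_dom (f := fun x : G ⋊[actHom P] P => (x.left, x.right)))

theorem continuous_sdpTop_right :
    Continuous (SemidirectProduct.right : G ⋊[actHom P] P → P) := by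
  unfold sdpTop
  exact continuous_snd.comp
    (continuous_induced_dom (f := fun x : G ⋊[actHom P] P => (x.left, x.right)))

theorem continuous_coe_subAutTop :
    Continuous fun p : P => (((p : topAut G) : G ≃ₜ G) : C(G, G)) := by
  let := coTop G
  let := autTop G
  exact continuous_induced_dom.comp
    (continuous_induced_dom.comp (continuous_induced_dom (f := (Subtype.val : P → topAut G))))

end AutTopology

section InnerAut

variable {G : Type*} [Group G] [TopologicalSpace G] [IsTopologicalGroup G]

@[simp]
theorem innerAutHom_apply (g x : G) : (innerAutHom G g : G ≃ₜ G) x = g * x * g⁻¹ := rfl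

theorem innerAutHom_injOn {K : Subgroup G} (hK : ∀ g ∈ K, g ∈ Subgroup.center G → g = 1) :
    Set.InjOn (innerAutHom G) K := by
  intro a ha b hb hab
  have hcomm : ∀ x, a * x * a⁻¹ = b * x * b⁻¹ := fun x => by
    simpa using congr_arg (fun q : topAut G => (q : G ≃ₜ G) x) hab
  have hcenter : a⁻¹ * b ∈ Subgroup.center G := Subgroup.mem_center_iff.2 fun x => by
    have := hcomm x
    calc x * (a⁻¹ * b) = a⁻¹ * (a * x * a⁻¹) * b := by group
      _ = a⁻¹ * b * x := by rw [this]; group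
  exact inv_mul_eq_one.1 (hK _ (mul_mem (inv_mem ha) hb) hcenter)

noncomputable def innerAutEquiv {B : Subgroup G} (hB : Set.InjOn (innerAutHom G) B) :
    B ≃* B.map (innerAutHom G) :=
  (MonoidHom.ofInjective (f := (innerAutHom G).domRestrict B)
    fun a b h => Subtype.ext (hB a.2 b.2 h)).trans
    (MulEquiv.subgroupCongr ((innerAutHom G).domRestrict_range B))

theorem actHom_map_innerAutHom {B : Subgroup G} (hB : Set.InjOn (innerAutHom G) B)
    (p : B.map (innerAutHom G)) (x : G) :
    actHom (B.map (innerAutHom G)) p x =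
      ((innerAutEquiv hB).symm p : G) * x * ((innerAutEquiv hB).symm p : G)⁻¹ := by
  conv_lhs => rw [← (innerAutEquiv hB).apply_symm_apply p]
  rfl

theorem continuous_innerAutEquiv_symm [CompactSpace G] [T2Space G] {B : Subgroup G}
    (hZ : ∀ g ∈ closure (B : Set G), g ∈ Subgroup.center G → g = 1)
    (hB : Set.InjOn (innerAutHom G) B) :
    Continuous (innerAutEquiv hB).symm := by
  have : CompactSpace B.topologicalClosure :=
    isCompact_iff_compactSpace.1 B.isClosed_topologicalClosure.isCompact
  let conj : B.topologicalClosure → C(G, G) := fun k =>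
    ⟨fun x => k * x * (k : G)⁻¹, by fun_prop⟩
  have hconj : Topology.IsEmbedding conj := by
    refine (Continuous.isClosedEmbedding ?_ ?_).isEmbedding
    · exact ContinuousMap.continuous_of_continuous_uncurry _
        (show Continuous fun q : B.topologicalClosure × G => (q.1 : G) * q.2 * (q.1 : G)⁻¹ by
          fun_prop)
    · intro a b hab
      exact Subtype.ext (innerAutHom_injOn hZ a.2 b.2
        (Subtype.ext (Homeomorph.ext fun x => DFunLike.congr_fun hab x)))
  have hincl : Topology.IsEmbedding (Subgroup.inclusion B.le_topologicalClosure) :=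
    Topology.IsEmbedding.inclusion B.le_topologicalClosure
  rw [(hconj.comp hincl).continuous_iff]
  convert continuous_coe_subAutTop (B.map (innerAutHom G)) with p
  ext x
  exact (actHom_map_innerAutHom hB p x).symm

noncomputable def innerSdpToProd {B : Subgroup G} (hB : Set.InjOn (innerAutHom G) B) :
    G ⋊[actHom (B.map (innerAutHom G))] B.map (innerAutHom G) →* G × B :=
  ((MonoidHom.id G).prodMap (innerAutEquiv hB).symm.toMonoidHom).comp
    (SemidirectProduct.toProdOfConj (B.subtype.comp (innerAutEquiv hB).symm.toMonoidHom)
      (actHom_map_innerAutHom hB))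

@[simp]
theorem innerSdpToProd_apply {B : Subgroup G} (hB : Set.InjOn (innerAutHom G) B)
    (x : G ⋊[actHom (B.map (innerAutHom G))] B.map (innerAutHom G)) :
    innerSdpToProd hB x =
      (x.left * ((innerAutEquiv hB).symm x.right : G), (innerAutEquiv hB).symm x.right) :=
  rfl

theorem innerSdpToProd_injective {B : Subgroup G} (hB : Set.InjOn (innerAutHom G) B) :
    Injective (innerSdpToProd hB) :=
  (injective_id.prodMap (innerAutEquiv hB).symm.injective).comp
    (SemidirectProduct.toProdOfConj_injective _ _)

theorem continuous_innerSdpToProd [CompactSpace G] [T2Space G] {B : Subgroup G}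
    (hZ : ∀ g ∈ closure (B : Set G), g ∈ Subgroup.center G → g = 1)
    (hB : Set.InjOn (innerAutHom G) B) :
    Continuous (innerSdpToProd hB) := by
  have hβ := (continuous_innerAutEquiv_symm hZ hB).comp (continuous_sdpTop_right _)
  exact ((continuous_sdpTop_left _).mul (continuous_subtype_val.comp hβ)).prodMk hβ

end InnerAut

theorem isMulCommutative_of_mul_self_eq_one {K : Type*} [Group K] (h : ∀ k : K, k * k = 1) :
    IsMulCommutative K :=
  ⟨⟨Commute.of_orderOf_dvd_two fun k =>
    orderOf_dvd_iff_pow_eq_one.2 (by rw [sq]; exact h k)⟩⟩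

theorem eq_one_or_eq_of_mem_zpowers {K : Type*} [Group K] {x y : K} (hx : x * x = 1)
    (hy : y ∈ Subgroup.zpowers x) : y = 1 ∨ y = x := by
  obtain ⟨k, rfl⟩ := Subgroup.mem_zpowers_iff.1 hy
  have hx2 : x ^ (2 : ℤ) = 1 := by rw [zpow_two]; exact hx
  rw [← Int.emod_add_mul_ediv k 2, zpow_add, zpow_mul, hx2, one_zpow, mul_one]
  rcases Int.emod_two_eq_zero_or_one k with h | h <;> simp [h]

section Boolean

variable {G : Type u} [Group G] [TopologicalSpace G] [IsTopologicalGroup G] [T2Space G]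
  {B : Subgroup G}

theorem mul_self_eq_one_of_mem_closure (hB : ∀ b ∈ B, b * b = 1) {g : G}
    (hg : g ∈ closure (B : Set G)) : g * g = 1 :=
  closure_minimal hB (isClosed_eq (by fun_prop) continuous_const) hg

theorem exists_injective_hom_tendsto_one_of_mem_closure (hB : ∀ b ∈ B, b * b = 1) {x : G}
    (hx : x ∈ closure (B : Set G)) (hxB : x ∉ B) :
    ∃ (L : Type u) (_ : Group L) (_ : TopologicalSpace L) (_ : IsTopologicalGroup L)
      (_ : T2Space L) (ψ : B →* L), Continuous ψ ∧ Injective ψ ∧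
        Tendsto ψ (comap Subtype.val (𝓝 x)) (𝓝 1) := by
  set K := B.topologicalClosure
  have hK : ∀ k : K, k * k = 1 := fun k => Subtype.ext (mul_self_eq_one_of_mem_closure hB k.2)
  have := isMulCommutative_of_mul_self_eq_one hK
  let x' : K := ⟨x, hx⟩
  let N := Subgroup.zpowers x'
  have hN : ∀ k ∈ N, k = 1 ∨ k = x' := fun k hk => eq_one_or_eq_of_mem_zpowers (hK x') hk
  have : IsClosed (N : Set K) := ((Set.toFinite {1, x'}).subset hN).isClosed
  refine ⟨K ⧸ N, inferInstance, inferInstance, inferInstance, inferInstance,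
    (QuotientGroup.mk' N).comp (Subgroup.inclusion B.le_topologicalClosure), ?_, ?_, ?_⟩
  · exact QuotientGroup.continuous_mk.comp (continuous_inclusion B.le_topologicalClosure)
  · refine (injective_iff_map_eq_one _).2 fun b hb => ?_
    rcases hN _ ((QuotientGroup.eq_one_iff _).1 hb) with h | h
    · exact Subgroup.inclusion_injective B.le_topologicalClosure (h.trans (map_one _).symm)
    · have hbx : (b : G) = x := congr_arg Subtype.val h
      exact absurd (hbx ▸ b.2) hxB
  · have hincl : Tendsto (Subgroup.inclusion B.le_topologicalClosure)
        (comap Subtype.val (𝓝 x)) (𝓝 x') := by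
      rw [nhds_subtype, tendsto_comap_iff]
      exact tendsto_comap
    have hx' : (x' : K ⧸ N) = 1 := (QuotientGroup.eq_one_iff _).2 (Subgroup.mem_zpowers x')
    rw [← hx']
    exact (QuotientGroup.continuous_mk.tendsto x').comp hincl

end Boolean

theorem semidirectProduct_not_minimal_of_boolean (G : Type*)
    [Group G] [TopologicalSpace G] [IsTopologicalGroup G] [CompactSpace G] [T2Space G]
    (B : Subgroup G) (hBool : ∀ b ∈ B, b * b = 1)
    (hBnotClosed : ¬ IsClosed (B : Set G))
    (hZ : ∀ g ∈ closure (B : Set G), g ∈ Subgroup.center G → g = 1) :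
    ¬ IsMinimalTopGroup
        (G ⋊[actHom (Subgroup.map (innerAutHom G) B)] ↥(Subgroup.map (innerAutHom G) B))
        (sdpTop (Subgroup.map (innerAutHom G) B)) := by
  obtain ⟨x, hx, hxB⟩ : ∃ x ∈ closure (B : Set G), x ∉ B :=
    Set.not_subset.1 fun h => hBnotClosed (closure_subset_iff_isClosed.1 h)
  obtain ⟨L, _, _, _, _, ψ, hψc, hψi, hψx⟩ :=
    exists_injective_hom_tendsto_one_of_mem_closure hBool hx hxB
  have hB : Set.InjOn (innerAutHom G) B :=
    (innerAutHom_injOn (K := B.topologicalClosure) hZ).mono B.le_topologicalClosure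
  let Φ := ((MonoidHom.id G).prodMap ψ).comp (innerSdpToProd hB)
  refine not_isMinimalTopGroup_of_injective Φ
    ((injective_id.prodMap hψi).comp (innerSdpToProd_injective hB))
    (continuous_id.prodMap hψc |>.comp (continuous_innerSdpToProd hZ hB))
    (F := comap Subtype.val (𝓝 x)) (f := fun b => ⟨(b : G)⁻¹, innerAutEquiv hB b⟩) ?_ ?_
  · have hΦ : Φ ∘ (fun b : B => ⟨(b : G)⁻¹, innerAutEquiv hB b⟩) =
        fun b => (1, ψ b) := by
      ext b <;> simp [Φ]
    rw [hΦ]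
    exact tendsto_const_nhds.prodMk_nhds hψx
  · intro h
    have := mem_closure_iff_comap_neBot.1 hx
    have hinv : Tendsto (fun b : B => (b : G)⁻¹) (comap Subtype.val (𝓝 x)) (𝓝 1) :=
      ((continuous_sdpTop_left _).tendsto 1).comp h
    have hx1 : x = 1 := tendsto_nhds_unique tendsto_comap (by simpa using hinv.inv)
    exact hxB (hx1 ▸ B.one_mem)
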